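/- Let f be a probability density function on [0,∞) that is positive, absolutely continuous, and such that f′ is bounded on every compact subinterval of [0,∞). Let F̄(t) = ∫ₜ^∞ f(x) dx and let m be the renewal density, i.e., the solution of m(t) = f(t) + ∫₀ᵗ m(x) f(t−x) dx for t ≥ 0. Then for all t > 0: ∫₀ᵗ m′(x) F̄(t−x) dx = f(t) − f(0) F̄(t). -/

import Mathlib

/-!
Differentiating the renewal equation `m = f + m ⋆ f`, with `⋆` the convolution over `[0, t]`,
suggests `m' = f' + f 0 * m + m ⋆ f'`; integrating back, Fubini on the triangle
`0 < u < x ≤ t` turns `∫₀ᵗ (m ⋆ f')` into `∫₀ᵗ m u (f (t - u) - f 0) du`, which recovers `m`.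
For the identity write `F̄ (t - x) = 1 - ∫₀^{t-x} f`: the same exchange of integrals turns
`∫₀ᵗ m' x ∫₀^{t-x} f` into `∫₀ᵗ f y (m (t - y) - m 0) dy = m t - f t - m 0 (1 - F̄ t)`.
-/

open MeasureTheory Set intervalIntegral

noncomputable def survival (f : ℝ → ℝ) (t : ℝ) : ℝ := ∫ x in Set.Ioi t, f x

noncomputable def causalConv (φ ψ : ℝ → ℝ) (x : ℝ) : ℝ := ∫ u in (0 : ℝ)..x, φ u * ψ (x - u)

noncomputable def causalConvKernel (φ ψ : ℝ → ℝ) (x u : ℝ) : ℝ :=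
  if u < x then φ u * ψ (x - u) else 0

section CausalConvolution

variable {φ ψ : ℝ → ℝ} {t : ℝ}

theorem causalConv_comm (φ ψ : ℝ → ℝ) (x : ℝ) : causalConv φ ψ x = causalConv ψ φ x := by
  have h := integral_comp_sub_left (a := 0) (b := x) (fun u => ψ u * φ (x - u)) x
  simp only [sub_sub_cancel, sub_self, sub_zero] at h
  simp only [causalConv, ← h, mul_comm]

theorem integrableOn_causalConvKernel (hφ : IntegrableOn φ (Ioc 0 t))
    (hψ : IntegrableOn ψ (Ioc 0 t)) :
    IntegrableOn (Function.uncurry (causalConvKernel φ ψ)) (Ioc 0 t ×ˢ Ioc 0 t) := by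
  have hK : Integrable (fun p : ℝ × ℝ =>
      (Ioc 0 t).indicator φ p.2 * (Ioc 0 t).indicator ψ (p.1 - p.2)) (volume.prod volume) :=
    (hφ.integrable_indicator measurableSet_Ioc).convolution_integrand
      (ContinuousLinearMap.mul ℝ ℝ) (hψ.integrable_indicator measurableSet_Ioc)
  rw [Measure.volume_eq_prod]
  refine hK.integrableOn.congr_fun ?_ (measurableSet_Ioc.prod measurableSet_Ioc)
  rintro ⟨x, u⟩ ⟨⟨-, hxt⟩, hu0, hut⟩
  by_cases hux : u < x
  · simp [causalConvKernel, hux, hu0, hut, hxt.trans (le_add_of_nonneg_right hu0.le)]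
  · simp [causalConvKernel, hux]

theorem integral_causalConvKernel_left {x : ℝ} (hx : x ∈ Icc 0 t) :
    ∫ u in (0 : ℝ)..t, causalConvKernel φ ψ x u = causalConv φ ψ x := by
  have hset : Ioc 0 t ∩ Iio x = Ioo 0 x := by
    ext u; simp only [mem_inter_iff, mem_Ioc, mem_Iio, mem_Ioo]
    constructor
    · rintro ⟨⟨h0, -⟩, hux⟩; exact ⟨h0, hux⟩
    · rintro ⟨h0, hux⟩; exact ⟨⟨h0, (hux.trans_le hx.2).le⟩, hux⟩
  have hK : causalConvKernel φ ψ x = (Iio x).indicator fun u => φ u * ψ (x - u) := by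
    ext u; simp [causalConvKernel, indicator]
  rw [causalConv, integral_of_le (hx.1.trans hx.2), integral_of_le hx.1, hK,
    setIntegral_indicator measurableSet_Iio, hset, integral_Ioc_eq_integral_Ioo]

theorem integral_causalConvKernel_right {u : ℝ} (hu : u ∈ Icc 0 t) :
    ∫ x in (0 : ℝ)..t, causalConvKernel φ ψ x u = φ u * ∫ v in (0 : ℝ)..(t - u), ψ v := by
  have hset : Ioc 0 t ∩ Ioi u = Ioc u t := by
    ext x; simp only [mem_inter_iff, mem_Ioc, mem_Ioi]
    constructor
    · rintro ⟨⟨-, hxt⟩, hux⟩; exact ⟨hux, hxt⟩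
    · rintro ⟨hux, hxt⟩; exact ⟨⟨hu.1.trans_lt hux, hxt⟩, hux⟩
  have hK : (causalConvKernel φ ψ · u) = (Ioi u).indicator fun x => φ u * ψ (x - u) := by
    ext x; simp [causalConvKernel, indicator]
  rw [integral_of_le (hu.1.trans hu.2), hK, setIntegral_indicator measurableSet_Ioi, hset,
    ← integral_of_le hu.2, intervalIntegral.integral_const_mul,
    integral_comp_sub_right (fun v => ψ v), sub_self]

theorem integrable_prod_causalConvKernel (hφ : IntegrableOn φ (Ioc 0 t))
    (hψ : IntegrableOn ψ (Ioc 0 t)) :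
    Integrable (Function.uncurry (causalConvKernel φ ψ))
      ((volume.restrict (Ioc 0 t)).prod (volume.restrict (Ioc 0 t))) := by
  rw [Measure.prod_restrict, ← Measure.volume_eq_prod]
  exact integrableOn_causalConvKernel hφ hψ

theorem intervalIntegrable_causalConv (hφ : IntegrableOn φ (Ioc 0 t))
    (hψ : IntegrableOn ψ (Ioc 0 t)) (ht : 0 ≤ t) :
    IntervalIntegrable (causalConv φ ψ) volume 0 t := by
  rw [intervalIntegrable_iff_integrableOn_Ioc_of_le ht]
  have h : IntegrableOn (fun x => ∫ u in Ioc 0 t, causalConvKernel φ ψ x u) (Ioc 0 t) :=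
    (integrable_prod_causalConvKernel hφ hψ).integral_prod_left
  exact h.congr_fun (fun x hx => (integral_of_le ht).symm.trans
    (integral_causalConvKernel_left (Ioc_subset_Icc_self hx))) measurableSet_Ioc

theorem intervalIntegrable_mul_primitive (hφ : IntegrableOn φ (Ioc 0 t))
    (hψ : IntegrableOn ψ (Ioc 0 t)) (ht : 0 ≤ t) :
    IntervalIntegrable (fun u => φ u * ∫ v in (0 : ℝ)..(t - u), ψ v) volume 0 t := by
  rw [intervalIntegrable_iff_integrableOn_Ioc_of_le ht]
  have h : IntegrableOn (fun u => ∫ x in Ioc 0 t, causalConvKernel φ ψ x u) (Ioc 0 t) :=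
    (integrable_prod_causalConvKernel hφ hψ).integral_prod_right
  exact h.congr_fun (fun u hu => (integral_of_le ht).symm.trans
    (integral_causalConvKernel_right (Ioc_subset_Icc_self hu))) measurableSet_Ioc

theorem integral_causalConv (hφ : IntegrableOn φ (Ioc 0 t)) (hψ : IntegrableOn ψ (Ioc 0 t))
    (ht : 0 ≤ t) :
    ∫ x in (0 : ℝ)..t, causalConv φ ψ x =
      ∫ u in (0 : ℝ)..t, φ u * ∫ v in (0 : ℝ)..(t - u), ψ v := by
  calc ∫ x in (0 : ℝ)..t, causalConv φ ψ x
      = ∫ x in (0 : ℝ)..t, ∫ u in (0 : ℝ)..t, causalConvKernel φ ψ x u :=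
        integral_congr fun x hx => (integral_causalConvKernel_left (uIcc_of_le ht ▸ hx)).symm
    _ = ∫ u in (0 : ℝ)..t, ∫ x in (0 : ℝ)..t, causalConvKernel φ ψ x u :=
        intervalIntegral_intervalIntegral_swap (by
          simpa only [uIoc_of_le ht] using integrableOn_causalConvKernel hφ hψ)
    _ = ∫ u in (0 : ℝ)..t, φ u * ∫ v in (0 : ℝ)..(t - u), ψ v :=
        integral_congr fun u hu => integral_causalConvKernel_right (uIcc_of_le ht ▸ hu)

theorem integral_mul_primitive_comm (hφ : IntegrableOn φ (Ioc 0 t))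
    (hψ : IntegrableOn ψ (Ioc 0 t)) (ht : 0 ≤ t) :
    ∫ u in (0 : ℝ)..t, φ u * ∫ v in (0 : ℝ)..(t - u), ψ v =
      ∫ u in (0 : ℝ)..t, ψ u * ∫ v in (0 : ℝ)..(t - u), φ v := by
  simp only [← integral_causalConv hφ hψ ht, ← integral_causalConv hψ hφ ht, causalConv_comm φ ψ]

theorem integral_mul_primitive_eq {g : ℝ → ℝ} (hφ : IntegrableOn φ (Ioc 0 t))
    (hψ : IntegrableOn ψ (Ioc 0 t)) (hg : ∀ s ∈ Icc 0 t, g s = g 0 + ∫ v in (0 : ℝ)..s, ψ v)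
    (ht : 0 ≤ t) :
    ∫ u in (0 : ℝ)..t, φ u * ∫ v in (0 : ℝ)..(t - u), ψ v =
      causalConv φ g t - g 0 * ∫ u in (0 : ℝ)..t, φ u := by
  have hφ' : IntervalIntegrable φ volume 0 t :=
    (intervalIntegrable_iff_integrableOn_Ioc_of_le ht).2 hφ
  have hconv : causalConv φ g t =
      ∫ u in (0 : ℝ)..t, (φ u * (∫ v in (0 : ℝ)..(t - u), ψ v) + g 0 * φ u) := by
    refine integral_congr fun u hu => ?_
    rw [uIcc_of_le ht] at hu
    simp only [hg (t - u) ⟨sub_nonneg.2 hu.2, by linarith [hu.1]⟩]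
    ring
  rw [hconv, integral_add (intervalIntegrable_mul_primitive hφ hψ ht) (hφ'.const_mul _),
    intervalIntegral.integral_const_mul]
  ring

end CausalConvolution

/-- The derivative of `m` obtained by differentiating `m = f + m ⋆ f` under the integral sign,
set to `0` on `(-∞, 0)`, where the renewal equation says nothing about `m`. -/
noncomputable def renewalDeriv (f f' m : ℝ → ℝ) : ℝ → ℝ :=
  (Ici 0).indicator fun s => f' s + f 0 * m s + causalConv m f' s

section Renewal

variable {f f' m m' : ℝ → ℝ} {t : ℝ}

theorem intervalIntegrable_renewalDeriv (hf' : ∀ T, IntegrableOn f' (Ioc 0 T))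
    (hm : ∀ T, IntegrableOn m (Ioc 0 T)) (a b : ℝ) :
    IntervalIntegrable (renewalDeriv f f' m) volume a b := by
  set T := max (max a b) 0
  have hT : 0 ≤ T := le_max_right _ _
  have hsub : Ici 0 ∩ uIoc a b ⊆ Icc 0 T := fun x ⟨hx0, hx⟩ =>
    ⟨hx0, hx.2.trans (le_max_left _ _)⟩
  have hconv := (intervalIntegrable_iff_integrableOn_Ioc_of_le hT).1
    (intervalIntegrable_causalConv (hm T) (hf' T) hT)
  rw [intervalIntegrable_iff, renewalDeriv, integrableOn_indicator_iff measurableSet_Ici]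
  refine IntegrableOn.mono_set ?_ hsub
  rw [integrableOn_Icc_iff_integrableOn_Ioc]
  exact ((hf' T).add ((hm T).const_mul (f 0))).add hconv

theorem renewal_at_zero (hm_eq : m 0 = f 0 + causalConv m f 0) : m 0 = f 0 := by
  simpa [causalConv] using hm_eq

theorem eq_add_integral_renewalDeriv (hf' : IntegrableOn f' (Ioc 0 t))
    (hf_ac : ∀ s ∈ Icc 0 t, f s = f 0 + ∫ x in (0 : ℝ)..s, f' x) (hm : IntegrableOn m (Ioc 0 t))
    (hm_eq : ∀ s ∈ Icc 0 t, m s = f s + causalConv m f s) (ht : 0 ≤ t) :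
    m t = m 0 + ∫ x in (0 : ℝ)..t, renewalDeriv f f' m x := by
  have hf'I := (intervalIntegrable_iff_integrableOn_Ioc_of_le ht).2 hf'
  have hmI := ((intervalIntegrable_iff_integrableOn_Ioc_of_le ht).2 hm).const_mul (f 0)
  have hderiv : ∫ x in (0 : ℝ)..t, renewalDeriv f f' m x =
      ∫ x in (0 : ℝ)..t, (f' x + f 0 * m x + causalConv m f' x) :=
    integral_congr fun x hx => indicator_of_mem (uIcc_of_le ht ▸ hx).1 _
  rw [hderiv, integral_add (hf'I.add hmI) (intervalIntegrable_causalConv hm hf' ht),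
    integral_add hf'I hmI, integral_causalConv hm hf' ht,
    integral_mul_primitive_eq hm hf' hf_ac ht, intervalIntegral.integral_const_mul,
    renewal_at_zero (hm_eq 0 ⟨le_rfl, ht⟩)]
  linarith [hm_eq t ⟨ht, le_rfl⟩, hf_ac t ⟨ht, le_rfl⟩]

theorem integral_mul_survival (hf : IntegrableOn f (Ioi 0)) (hF : survival f 0 = 1)
    (hm' : IntervalIntegrable m' volume 0 t)
    (hm_ac : ∀ s ∈ Icc 0 t, m s = m 0 + ∫ x in (0 : ℝ)..s, m' x)
    (hm_eq : ∀ s ∈ Icc 0 t, m s = f s + causalConv m f s) (ht : 0 ≤ t) :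
    ∫ x in (0 : ℝ)..t, m' x * survival f (t - x) = f t - f 0 * survival f t := by
  have hfI : IntegrableOn f (Ioc 0 t) := hf.mono_set Ioc_subset_Ioi_self
  have hm'I := (intervalIntegrable_iff_integrableOn_Ioc_of_le ht).1 hm'
  have hsurv : ∀ s, 0 ≤ s → survival f s = 1 - ∫ x in (0 : ℝ)..s, f x := fun s hs => by
    rw [← hF, ← integral_Ioi_sub_Ioi hf hs, survival, survival, sub_sub_cancel]
  calc ∫ x in (0 : ℝ)..t, m' x * survival f (t - x)
      = ∫ x in (0 : ℝ)..t, (m' x - m' x * ∫ y in (0 : ℝ)..(t - x), f y) := by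
        refine integral_congr fun x hx => ?_
        rw [uIcc_of_le ht] at hx
        rw [hsurv (t - x) (sub_nonneg.2 hx.2)]
        ring
    _ = (m t - m 0) - ∫ y in (0 : ℝ)..t, f y * ∫ x in (0 : ℝ)..(t - y), m' x := by
        rw [integral_sub hm' (intervalIntegrable_mul_primitive hm'I hfI ht),
          integral_mul_primitive_comm hm'I hfI ht, hm_ac t ⟨ht, le_rfl⟩, add_sub_cancel_left]
    _ = (m t - m 0) - (causalConv f m t - m 0 * ∫ y in (0 : ℝ)..t, f y) := by
        rw [integral_mul_primitive_eq hfI hm'I hm_ac ht]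
    _ = f t - f 0 * survival f t := by
        rw [causalConv_comm, hsurv t ht, renewal_at_zero (hm_eq 0 ⟨le_rfl, ht⟩)]
        linarith [hm_eq t ⟨ht, le_rfl⟩]

end Renewal

theorem renewal_density_derivative_integral_identity_general
    (f f' m : ℝ → ℝ)
    (hf_int : IntegrableOn f (Set.Ici 0))
    (hf_one : (∫ x in Set.Ici (0 : ℝ), f x) = 1)
    (hf'_intloc : ∀ a b : ℝ, IntervalIntegrable f' volume a b)
    (hf_ac : ∀ t ∈ Set.Ici (0 : ℝ), f t = f 0 + ∫ x in (0 : ℝ)..t, f' x)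
    (hm_loc : LocallyIntegrableOn m (Set.Ici 0))
    (hm_eq : ∀ t ∈ Set.Ici (0 : ℝ), m t = f t + ∫ x in (0 : ℝ)..t, m x * f (t - x)) :
    ∃ m' : ℝ → ℝ,
      (∀ a b : ℝ, IntervalIntegrable m' volume a b) ∧
      (∀ t ∈ Set.Ici (0 : ℝ), m t = m 0 + ∫ x in (0 : ℝ)..t, m' x) ∧
      ∀ t : ℝ, 0 < t →
        (∫ x in (0 : ℝ)..t, m' x * survival f (t - x)) = f t - f 0 * survival f t := by
  have hf'_int : ∀ T, IntegrableOn f' (Ioc 0 T) := fun T => (hf'_intloc 0 T).1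
  have hm_int : ∀ T, IntegrableOn m (Ioc 0 T) := fun T =>
    (hm_loc.integrableOn_compact_subset Icc_subset_Ici_self isCompact_Icc).mono_set
      Ioc_subset_Icc_self
  have hm_eq' : ∀ t, ∀ s ∈ Icc 0 t, m s = f s + causalConv m f s := fun _ s hs => hm_eq s hs.1
  have hm_ac : ∀ t ∈ Ici 0, m t = m 0 + ∫ x in (0 : ℝ)..t, renewalDeriv f f' m x :=
    fun t ht => eq_add_integral_renewalDeriv (hf'_int t) (fun s hs => hf_ac s hs.1) (hm_int t)
      (hm_eq' t) ht
  have hF : survival f 0 = 1 := by rwa [survival, ← integral_Ici_eq_integral_Ioi]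
  refine ⟨renewalDeriv f f' m, intervalIntegrable_renewalDeriv hf'_int hm_int, hm_ac,
    fun t ht => ?_⟩
  exact integral_mul_survival (hf_int.mono_set Ioi_subset_Ici_self) hF
    (intervalIntegrable_renewalDeriv hf'_int hm_int 0 t) (fun s hs => hm_ac s hs.1) (hm_eq' t)
    ht.le

/-- **Equation (7) of the paper.**
Let `f` be a probability density on `[0, ∞)` that is positive, absolutely continuous (with
a.e. derivative `f'`, so that `f t = f 0 + ∫ x in 0..t, f' x`), and such that `f'` is bounded
on every compact subinterval of `[0, ∞)`.  Let `F̄` be the survival function and `m` the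
renewal density, i.e. the solution of `m t = f t + ∫ x in 0..t, m x * f (t - x)` for `t ≥ 0`.
Then, with `m'` a version of the derivative of (the absolutely continuous) `m`, for all
`t > 0`: `∫ x in 0..t, m' x * F̄ (t - x) = f t - f 0 * F̄ t`. -/
theorem renewal_density_derivative_integral_identity
    (f f' m : ℝ → ℝ)
    (hf_meas : Measurable f)
    (hf_pos : ∀ x ∈ Set.Ici (0 : ℝ), 0 < f x)
    (hf_int : IntegrableOn f (Set.Ici 0))
    (hf_one : (∫ x in Set.Ici (0 : ℝ), f x) = 1)
    (hf'_meas : Measurable f')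
    (hf'_intloc : ∀ a b : ℝ, IntervalIntegrable f' volume a b)
    (hf_ac : ∀ t ∈ Set.Ici (0 : ℝ), f t = f 0 + ∫ x in (0 : ℝ)..t, f' x)
    (hf'_bdd : ∀ a b : ℝ, ∃ C : ℝ, ∀ x ∈ Set.Icc a b, |f' x| ≤ C)
    (hm_meas : Measurable m)
    (hm_loc : LocallyIntegrableOn m (Set.Ici 0))
    (hm_eq : ∀ t ∈ Set.Ici (0 : ℝ), m t = f t + ∫ x in (0 : ℝ)..t, m x * f (t - x)) :
    ∃ m' : ℝ → ℝ,
      (∀ a b : ℝ, IntervalIntegrable m' volume a b) ∧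
      (∀ t ∈ Set.Ici (0 : ℝ), m t = m 0 + ∫ x in (0 : ℝ)..t, m' x) ∧
      ∀ t : ℝ, 0 < t →
        (∫ x in (0 : ℝ)..t, m' x * survival f (t - x)) = f t - f 0 * survival f t :=
  renewal_density_derivative_integral_identity_general f f' m hf_int hf_one hf'_intloc hf_ac hm_loc
    hm_eq
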